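/- For every alley a ∈ 𝒜 one has φ(δ(a)) = δ(φ(a)), where on the left δ is the difference operator on the span k𝒜 of alleys and φ is extended linearly, and on the right δ is the difference operator on kL_n. -/

import Mathlib

set_option maxHeartbeats 1000000

/-! # Common definitions: trees, forests, descent algebras -/

/-- Labeled binary trees: leaves carry a natural number (positive in valid forests),
internal nodes carry a label. -/
inductive LTree : Type
  | leaf : ℕ → LTree
  | node : ℕ → LTree → LTree → LTree
  deriving DecidableEq

instance : Inhabited LTree := ⟨LTree.leaf 1⟩

/-- Unlabeled binary trees with natural number leaves. -/
inductive UTree : Type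
  | leaf : ℕ → UTree
  | node : UTree → UTree → UTree
  deriving DecidableEq

instance : Inhabited UTree := ⟨UTree.leaf 1⟩

namespace LTree

/-- The value of a tree: the sum of its leaf entries. -/
def value : LTree → ℕ
  | leaf x => x
  | node _ t1 t2 => t1.value + t2.value

/-- The foliage of a tree: the list of its leaf entries, left to right. -/
def foliage : LTree → List ℕ
  | leaf x => [x]
  | node _ t1 t2 => t1.foliage ++ t2.foliage

/-- The number of internal nodes. -/
def numNodes : LTree → ℕ
  | leaf _ => 0
  | node _ t1 t2 => t1.numNodes + t2.numNodes + 1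

/-- The list of node labels (in preorder). -/
def labels : LTree → List ℕ
  | leaf _ => []
  | node i t1 t2 => i :: (t1.labels ++ t2.labels)

/-- Labels strictly increase downwards, starting above `p`. -/
def incrFrom : ℕ → LTree → Prop
  | _, leaf _ => True
  | p, node i t1 t2 => p < i ∧ incrFrom i t1 ∧ incrFrom i t2

/-- Shift all node labels up by `m`. -/
def shift (m : ℕ) : LTree → LTree
  | leaf x => leaf x
  | node i t1 t2 => node (i + m) (t1.shift m) (t2.shift m)

/-- Decrease all node labels by one. -/
def dec : LTree → LTree
  | leaf x => leaf x
  | node i t1 t2 => node (i - 1) t1.dec t2.dec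

/-- A tree is aligned if at every node the value of the left subtree is
strictly smaller than the value of the right subtree. -/
def Aligned : LTree → Prop
  | leaf _ => True
  | node _ t1 t2 => t1.value < t2.value ∧ t1.Aligned ∧ t2.Aligned

/-- Replace the leaves of a tree (left to right) by the trees from the supplied list;
returns the new tree together with the unused trees. -/
def graft : LTree → List LTree → LTree × List LTree
  | leaf x, [] => (leaf x, [])
  | leaf _, t :: ts => (t, ts)
  | node i t1 t2, ts =>
    let p1 := t1.graft ts
    let p2 := t2.graft p1.2
    (node i p1.1 p2.1, p2.2)

/-- Find the node with label `i` and return the values of its two subtrees. -/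
def findLab (i : ℕ) : LTree → Option (ℕ × ℕ)
  | leaf _ => none
  | node j t1 t2 =>
    if j = i then some (t1.value, t2.value)
    else (t1.findLab i).orElse (fun _ => t2.findLab i)

/-- The label at the root, if the tree is a node. -/
def rootLabel? : LTree → Option ℕ
  | leaf _ => none
  | node i _ _ => some i

/-- The subtree at a position (list of booleans; `false` = left, `true` = right). -/
def subtreeAt : LTree → List Bool → Option LTree
  | t, [] => some t
  | leaf _, _ :: _ => none
  | node _ t1 t2, b :: p => (if b then t2 else t1).subtreeAt p

/-- Replace the subtree at a position. -/
def replaceAt : LTree → List Bool → LTree → LTree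
  | _, [], u => u
  | leaf x, _ :: _, _ => leaf x
  | node i t1 t2, b :: p, u =>
    if b then node i t1 (t2.replaceAt p u) else node i (t1.replaceAt p u) t2

end LTree

namespace UTree

/-- The value of an unlabeled tree. -/
def value : UTree → ℕ
  | leaf x => x
  | node t1 t2 => t1.value + t2.value

/-- The foliage of an unlabeled tree. -/
def foliage : UTree → List ℕ
  | leaf x => [x]
  | node t1 t2 => t1.foliage ++ t2.foliage

/-- The number of internal nodes. -/
def numNodes : UTree → ℕ
  | leaf _ => 0
  | node t1 t2 => t1.numNodes + t2.numNodes + 1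

/-- All leaf entries are positive. -/
def leavesPos : UTree → Prop
  | leaf x => 0 < x
  | node t1 t2 => t1.leavesPos ∧ t2.leavesPos

/-- An unlabeled tree is aligned if at every node the left value is smaller
than the right value. -/
def Aligned : UTree → Prop
  | leaf _ => True
  | node t1 t2 => t1.value < t2.value ∧ t1.Aligned ∧ t2.Aligned

/-- No node has two leaf children bearing the same value. -/
def NoTwin : UTree → Prop
  | leaf _ => True
  | node t1 t2 => t1.NoTwin ∧ t2.NoTwin ∧ ¬ ∃ a, t1 = leaf a ∧ t2 = leaf a

/-- Graft: replace leaves (left to right) by trees from the supplied list. -/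
def graft : UTree → List UTree → UTree × List UTree
  | leaf x, [] => (leaf x, [])
  | leaf _, t :: ts => (t, ts)
  | node t1 t2, ts =>
    let p1 := t1.graft ts
    let p2 := t2.graft p1.2
    (node p1.1 p2.1, p2.2)

/-- The total order on unlabeled trees: compare values, then (reversed) number of
nodes, then recursively the left and right subtrees. -/
def ltt : UTree → UTree → Prop
  | leaf a, leaf b => a < b
  | leaf a, node y1 y2 => a < (node y1 y2).value
  | node x1 x2, leaf b => (node x1 x2).value ≤ b
  | node x1 x2, node y1 y2 =>
      (node x1 x2).value < (node y1 y2).value ∨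
      ((node x1 x2).value = (node y1 y2).value ∧
        ((node y1 y2).numNodes < (node x1 x2).numNodes ∨
          ((node x1 x2).numNodes = (node y1 y2).numNodes ∧
            (ltt x1 y1 ∨ (x1 = y1 ∧ ltt x2 y2)))))

end UTree

/-- Erase the node labels of a labeled tree. -/
def eraseT : LTree → UTree
  | .leaf x => .leaf x
  | .node _ t1 t2 => .node (eraseT t1) (eraseT t2)

/-! ## Labeled forests -/

/-- The squash of a forest: the list of values of its trees. -/
def squash (X : List LTree) : List ℕ := X.map LTree.value

/-- The foliage of a forest. -/
def forestFoliage (X : List LTree) : List ℕ := X.flatMap LTree.foliage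

/-- The length of a forest: its total number of nodes. -/
def forestLen (X : List LTree) : ℕ := (X.map LTree.numNodes).sum

/-- The value of a forest: the sum of the values of its trees. -/
def forestValue (X : List LTree) : ℕ := (X.map LTree.value).sum

/-- All node labels of a forest. -/
def forestLabels (X : List LTree) : List ℕ := X.flatMap LTree.labels

/-- A list of labeled trees is a labeled forest if every node's label exceeds that
of its parent, the labels used are exactly `1, 2, …, l` where `l` is the number
of nodes, and all leaves are positive. -/
def IsLForest (X : List LTree) : Prop :=
  (∀ t ∈ X, t.incrFrom 0) ∧
  (forestLabels X).Perm (List.range' 1 (forestLen X)) ∧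
  ∀ x ∈ forestFoliage X, 0 < x

/-- A forest is aligned if all its trees are. -/
def ForestAligned (X : List LTree) : Prop := ∀ t ∈ X, t.Aligned

/-- Replace the leaves of the forest `X` (left to right) by the trees of `ys`. -/
def graftForest : List LTree → List LTree → List LTree
  | [], _ => []
  | t :: ts, ys =>
    let p := t.graft ys
    p.1 :: graftForest ts p.2

/-- The product `X • Y` of labeled forests: replace the `i`-th leaf of `X` by the
`i`-th tree of `Y`, after shifting all node labels of `Y` up by `ℓ(X)`.
(Meaningful when the foliage of `X` equals the squash of `Y`.) -/
def bullet (X Y : List LTree) : List LTree :=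
  graftForest X (Y.map (LTree.shift (forestLen X)))

/-- The forest of leaves determined by a composition. -/
def leavesOf (c : List ℕ) : List LTree := c.map LTree.leaf

/-- Iterated product `X₁ • (X₂ • (⋯ • Xₗ))` of a list of forests. -/
def chainProd : List (List LTree) → List LTree
  | [] => []
  | [A] => A
  | A :: F => bullet A (chainProd F)

/-- Find the node with label `i` in a forest; return the values of its subtrees. -/
def forestFindLab (i : ℕ) : List LTree → Option (ℕ × ℕ)
  | [] => none
  | t :: r => (t.findLab i).orElse (fun _ => forestFindLab i r)

/-! ## Unlabeled forests -/

def squashU (X : List UTree) : List ℕ := X.map UTree.value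
def foliageU (X : List UTree) : List ℕ := X.flatMap UTree.foliage
def forestLenU (X : List UTree) : ℕ := (X.map UTree.numNodes).sum
def forestValueU (X : List UTree) : ℕ := (X.map UTree.value).sum

/-- An unlabeled forest is valid when all its leaves are positive. -/
def IsUForest (X : List UTree) : Prop := ∀ x ∈ foliageU X, 0 < x

def ForestAlignedU (X : List UTree) : Prop := ∀ t ∈ X, t.Aligned

def graftForestU : List UTree → List UTree → List UTree
  | [], _ => []
  | t :: ts, ys =>
    let p := t.graft ys
    p.1 :: graftForestU ts p.2

/-- The product of unlabeled forests (no label adjustment needed). -/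
def bulletU (X Y : List UTree) : List UTree := graftForestU X Y

/-- Erase all node labels of a labeled forest. -/
def eraseF (X : List LTree) : List UTree := X.map eraseT
/-! ## The difference operator δ and the map Δ -/

/-- Locate the part of the forest whose root is the node labeled `1`; return its
(0-based) index together with the forest obtained by splitting that part into its
two subtrees. -/
def splitAt1 : List LTree → Option (ℕ × List LTree)
  | [] => none
  | LTree.node i t1 t2 :: rest =>
      if i = 1 then some (0, t1 :: t2 :: rest)
      else (splitAt1 rest).map (fun p => (p.1 + 1, LTree.node i t1 t2 :: p.2))
  | LTree.leaf x :: rest => (splitAt1 rest).map (fun p => (p.1 + 1, LTree.leaf x :: p.2))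

/-- Swap the entries in positions `i` and `i+1` (0-based) of a list. -/
def swapAdj {α : Type} : ℕ → List α → List α
  | 0, a :: b :: r => b :: a :: r
  | n + 1, a :: r => a :: swapAdj n r
  | _, l => l

/-- The difference operator `δ` on the span of labeled forests: if `ℓ(X) = 0` then
`δ(X) = X`; otherwise, if the node labeled 1 is the root of the `i`-th part with
subtrees `X₁, X₂`, then `δ(X) = Y − Y.(i,i+1)` where `Y` is obtained by replacing
the `i`-th part by the parts `X₁ X₂` and decreasing all labels by one. -/
noncomputable def deltaF (k : Type) [Ring k] (X : List LTree) : (List LTree) →₀ k :=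
  match splitAt1 X with
  | none => Finsupp.single X 1
  | some (i, Y) =>
      Finsupp.single (Y.map LTree.dec) 1 - Finsupp.single (swapAdj i (Y.map LTree.dec)) 1

/-- The linear extension of `δ`. -/
noncomputable def deltaLin (k : Type) [Ring k] :
    ((List LTree) →₀ k) →ₗ[k] ((List LTree) →₀ k) :=
  (Finsupp.lift ((List LTree) →₀ k) k (List LTree)) (deltaF k)

/-- `Δ(X) = δ^{ℓ(X)}(X)`, recorded as an element of the free associative algebra
with basis the compositions (identifying a forest of length 0 with its foliage). -/
noncomputable def DeltaComp (k : Type) [Ring k] (X : List LTree) : (List ℕ) →₀ k :=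
  Finsupp.mapDomain forestFoliage
    ((fun v => deltaLin k v)^[forestLen X] (Finsupp.single X 1))

/-- The linear map `Δ : kL → kℕ*`. -/
noncomputable def DeltaMap (k : Type) [Ring k] : ((List LTree) →₀ k) →ₗ[k] ((List ℕ) →₀ k) :=
  (Finsupp.lift ((List ℕ) →₀ k) k (List LTree)) (DeltaComp k)

/-! ## Pólya orbit sums and products on the spans -/

/-- The Pólya orbit sum `[X]` of a labeled forest: the sum of all distinct
rearrangements of its parts. -/
noncomputable def pol (k : Type) [Semiring k] (X : List LTree) : (List LTree) →₀ k :=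
  ∑ Y ∈ X.permutations.toFinset, Finsupp.single Y 1

/-- The Pólya orbit sum of an unlabeled forest. -/
noncomputable def polU (k : Type) [Semiring k] (X : List UTree) : (List UTree) →₀ k :=
  ∑ Y ∈ X.permutations.toFinset, Finsupp.single Y 1

/-- The bilinear product on `kL`: `X • Y` when foliage of `X` equals squash of `Y`,
and `0` otherwise. -/
noncomputable def mulL (k : Type) [Semiring k] (f g : (List LTree) →₀ k) : (List LTree) →₀ k :=
  f.sum fun X a => g.sum fun Y b =>
    if forestFoliage X = squash Y then Finsupp.single (bullet X Y) (a * b) else 0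

/-- The bilinear product on `kM` (unlabeled forests). -/
noncomputable def mulM (k : Type) [Semiring k] (f g : (List UTree) →₀ k) : (List UTree) →₀ k :=
  f.sum fun X a => g.sum fun Y b =>
    if foliageU X = squashU Y then Finsupp.single (bulletU X Y) (a * b) else 0

/-- The concatenation product on `kM`. -/
noncomputable def mulCat (k : Type) [Semiring k] (f g : (List UTree) →₀ k) : (List UTree) →₀ k :=
  f.sum fun X a => g.sum fun Y b => Finsupp.single (X ++ Y) (a * b)

/-- The product on the free associative algebra `kℕ*` (concatenation of compositions). -/
noncomputable def mulComp (k : Type) [Semiring k] (f g : (List ℕ) →₀ k) : (List ℕ) →₀ k :=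
  f.sum fun u a => g.sum fun v b => Finsupp.single (u ++ v) (a * b)

/-- The linear map `E : kL → kM` erasing node labels. -/
noncomputable def EL (k : Type) [Semiring k] : ((List LTree) →₀ k) →ₗ[k] ((List UTree) →₀ k) :=
  Finsupp.lmapDomain k k eraseF

/-- `π` on a single unlabeled tree: replace every node by the Lie bracket. -/
noncomputable def piT (k : Type) [Ring k] : UTree → (List ℕ) →₀ k
  | .leaf x => Finsupp.single [x] 1
  | .node t1 t2 => mulComp k (piT k t1) (piT k t2) - mulComp k (piT k t2) (piT k t1)

/-- `π` on an unlabeled forest: the concatenation product of the images of its parts. -/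
noncomputable def piF (k : Type) [Ring k] (X : List UTree) : (List ℕ) →₀ k :=
  (X.map (piT k)).foldr (mulComp k) (Finsupp.single [] 1)

/-- The Pólya action of a permutation of `Fin j` on a list: the entry in position
`i` of the result is the entry in position `σ⁻¹ i` of the input. -/
def permuteL {α : Type} [Inhabited α] {j : ℕ} (σ : Equiv.Perm (Fin j)) (X : List α) :
    List α :=
  List.ofFn fun i => X.getD ((σ⁻¹ i : Fin j) : ℕ) default
/-! ## The quiver Q, its paths, and the map ι -/

/-- The partition obtained by splitting one part `a+b` into parts `a` and `b`. -/
def applyStep (a b : ℕ) (p : Multiset ℕ) : Multiset ℕ := a ::ₘ b ::ₘ p.erase (a + b)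

/-- The vertex reached from `p` after performing the given splitting steps. -/
def sourceAfter (p : Multiset ℕ) (steps : List (ℕ × ℕ)) : Multiset ℕ :=
  steps.foldl (fun q s => applyStep s.1 s.2 q) p

/-- A path in the quiver `Q`, recorded by its destination vertex (a partition,
i.e. a multiset of parts) together with the list of branch symbols `[aᵢ|bᵢ]`
read from the destination towards the source. -/
structure QPath where
  dest : Multiset ℕ
  steps : List (ℕ × ℕ)
  deriving DecidableEq

/-- Each step is applicable in turn. -/
def SeqOK : Multiset ℕ → List (ℕ × ℕ) → Prop
  | _, [] => True
  | p, s :: rest => s.1 + s.2 ∈ p ∧ SeqOK (applyStep s.1 s.2 p) rest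

/-- A valid path of `Q`: positive parts, each step `[a|b]` has `0 < a < b`, and the
steps apply in sequence. -/
def QPath.Valid (P : QPath) : Prop :=
  (∀ x ∈ P.dest, 0 < x) ∧ (∀ s ∈ P.steps, 0 < s.1 ∧ s.1 < s.2) ∧ SeqOK P.dest P.steps

/-- The source vertex of a path. -/
def QPath.source (P : QPath) : Multiset ℕ := sourceAfter P.dest P.steps

/-- The canonical length-one forest attached to the edge with destination `q`
splitting a part `a + b` into `a` and `b`. -/
noncomputable def edgeForest (a b : ℕ) (q : Multiset ℕ) : List LTree :=
  LTree.node 1 (LTree.leaf a) (LTree.leaf b) :: leavesOf (q.erase (a + b)).toList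

/-- `ι` on the path with destination `p` and branch symbols `steps`:
the product (in `kℒ`) of the orbit sums of the edge forests, with the edge nearest
the destination leftmost, times the orbit sum of the source vertex. -/
noncomputable def iotaSteps (k : Type) [Semiring k] :
    Multiset ℕ → List (ℕ × ℕ) → ((List LTree) →₀ k)
  | p, [] => pol k (leavesOf p.toList)
  | p, s :: rest =>
      mulL k (pol k (edgeForest s.1 s.2 p)) (iotaSteps k (applyStep s.1 s.2 p) rest)

/-- `ι` of a single path. -/
noncomputable def iotaP (k : Type) [Semiring k] (P : QPath) : (List LTree) →₀ k :=
  iotaSteps k P.dest P.steps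

/-- The linear extension `ι : kQ → kℒ`. -/
noncomputable def iotaLinM (k : Type) [Semiring k] : (QPath →₀ k) →ₗ[k] ((List LTree) →₀ k) :=
  (Finsupp.lift ((List LTree) →₀ k) k QPath) (iotaP k)

/-! ## The branch monoid and its actions -/

/-- All ways to replace one leaf of value `a+b` in a tree by a node labeled `lab`
with leaves `a` and `b`. -/
def branchActTree (a b lab : ℕ) : LTree → List LTree
  | .leaf x =>
      if x = a + b then [LTree.node lab (LTree.leaf a) (LTree.leaf b)] else []
  | .node i t1 t2 =>
      (branchActTree a b lab t1).map (fun u => LTree.node i u t2) ++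
      (branchActTree a b lab t2).map (fun u => LTree.node i t1 u)

/-- All ways to replace one leaf of value `a+b` in a forest by a node labeled `lab`. -/
def branchWays (a b lab : ℕ) : List LTree → List (List LTree)
  | [] => []
  | t :: rest =>
      (branchActTree a b lab t).map (· :: rest) ++
      (branchWays a b lab rest).map (t :: ·)

/-- The action of the branch symbol `[a|b]` on `kL`. -/
noncomputable def actL1 (k : Type) [Semiring k] (s : ℕ × ℕ) (x : (List LTree) →₀ k) :
    (List LTree) →₀ k :=
  x.sum fun X a =>
    a • ((branchWays s.1 s.2 (forestLen X + 1) X).map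
      (fun Y => Finsupp.single Y (1 : k))).sum

/-- The action of a word of the branch monoid `ℬ*` on `kL`. -/
noncomputable def actLW (k : Type) [Semiring k] (w : List (ℕ × ℕ)) (x : (List LTree) →₀ k) :
    (List LTree) →₀ k :=
  w.foldl (fun y s => actL1 k s y) x

/-- The action of the branch symbol `[a|b]` on `kQ`: prepend an edge at the source
if the source has a part `a + b`, and `0` otherwise. -/
noncomputable def actQ1 (k : Type) [Semiring k] (s : ℕ × ℕ) (x : QPath →₀ k) : QPath →₀ k :=
  x.sum fun P a =>
    if s.1 + s.2 ∈ P.source then Finsupp.single ⟨P.dest, P.steps ++ [s]⟩ a else 0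

/-- The action of a word of `ℬ*` on `kQ`. -/
noncomputable def actQW (k : Type) [Semiring k] (w : List (ℕ × ℕ)) (x : QPath →₀ k) :
    QPath →₀ k :=
  w.foldl (fun y s => actQ1 k s y) x

/-- The path `𝔭(X)` associated to an (aligned) labeled forest `X`: the destination is
the partition of the squash of `X`, and the `i`-th branch symbol records the values of
the two subtrees of the node labeled `i`. -/
noncomputable def pPath (X : List LTree) : QPath :=
  ⟨(squash X : Multiset ℕ),
    (List.range (forestLen X)).map fun i => (forestFindLab (i + 1) X).getD (0, 0)⟩
/-! ## The equivalence ∼ on labeled forests -/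

/-- The subtree of a forest at a position (part index, path in the part). -/
def forestSubtreeAt (X : List LTree) (q : ℕ × List Bool) : Option LTree :=
  if h : q.1 < X.length then (X.get ⟨q.1, h⟩).subtreeAt q.2 else none

/-- Replace the subtree at a position of a forest. -/
def forestReplaceAt (X : List LTree) (q : ℕ × List Bool) (u : LTree) : List LTree :=
  X.set q.1 ((X.getD q.1 default).replaceAt q.2 u)

/-- The label of the parent node of the position `q`, if it exists. -/
def parentLabel (X : List LTree) (q : ℕ × List Bool) : Option ℕ :=
  if q.2 = [] then none
  else (forestSubtreeAt X (q.1, q.2.dropLast)).bind LTree.rootLabel?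

/-- Two positions address disjoint subtrees. -/
def PosDisjoint (q r : ℕ × List Bool) : Prop :=
  q.1 ≠ r.1 ∨ (q.1 = r.1 ∧ ¬ q.2 <+: r.2 ∧ ¬ r.2 <+: q.2)

/-- Move (1): exchange two disjoint non-leaf subtrees `U`, `V` of equal value such that
the labels of the parents of `U` and `V` (where these exist) are smaller than the root
labels of `U` and `V`. -/
def Move1 (X Y : List LTree) : Prop :=
  ∃ (q r : ℕ × List Bool) (U V : LTree),
    PosDisjoint q r ∧
    forestSubtreeAt X q = some U ∧ forestSubtreeAt X r = some V ∧
    U.rootLabel?.isSome ∧ V.rootLabel?.isSome ∧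
    U.value = V.value ∧
    (∀ m, (parentLabel X q = some m ∨ parentLabel X r = some m) →
      ∀ j, (U.rootLabel? = some j ∨ V.rootLabel? = some j) → m < j) ∧
    Y = forestReplaceAt (forestReplaceAt X q V) r U

/-- Exchange the entries in positions `i` and `j` of a list. -/
def swapEntries (X : List LTree) (i j : ℕ) : List LTree :=
  (X.set i (X.getD j default)).set j (X.getD i default)

/-- Move (2): exchange two parts of a forest. -/
def Move2 (X Y : List LTree) : Prop :=
  ∃ i j, i < j ∧ j < X.length ∧ Y = swapEntries X i j

/-- The equivalence relation `∼` generated by the two kinds of moves. -/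
def SimRel : List LTree → List LTree → Prop :=
  Relation.ReflTransGen (fun A B => Move1 A B ∨ Move2 A B)

/-! ## The labeling map F -/

/-- Preorder labeling of an unlabeled tree, starting after label `s`; returns the
labeled tree and the last label used. -/
def labelTreeAux : ℕ → UTree → LTree × ℕ
  | s, .leaf x => (LTree.leaf x, s)
  | s, .node t1 t2 =>
    let p1 := labelTreeAux (s + 1) t1
    let p2 := labelTreeAux p1.2 t2
    (LTree.node (s + 1) p1.1 p2.1, p2.2)

def labelFAux : ℕ → List UTree → List LTree
  | _, [] => []
  | s, t :: r =>
    let p := labelTreeAux s t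
    p.1 :: labelFAux p.2 r

/-- The labeled forest `F(X)`: label the nodes of each part in prefix (preorder)
order, the nodes of each part receiving smaller labels than those of later parts. -/
def labelF (X : List UTree) : List LTree := labelFAux 0 X

/-! ## Compositions from subsets, and alleys -/

/-- The composition of `n` attached to a subset `J ⊆ {1, …, n−1}`: the list of
successive differences of `{0, n} ∪ (S ∖ J)`. -/
def phi (n : ℕ) (J : Finset ℕ) : List ℕ :=
  let ts := ((Finset.Icc 1 (n - 1)) \ J).sort (· ≤ ·)
  List.zipWith (fun a b => b - a) (0 :: ts) (ts ++ [n])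

/-- The start of the maximal block of consecutive points containing `i` linked by
the transpositions in `J` (the transposition `s` links `s` and `s+1`). -/
def bStart (J : Finset ℕ) : ℕ → ℕ
  | 0 => 0
  | 1 => 1
  | i + 2 => if (i + 1) ∈ J then bStart J (i + 1) else i + 2

/-- The end of the maximal block of consecutive points of `{1, …, n}` containing `i`
linked by the transpositions in `J`. -/
def bEnd (J : Finset ℕ) (n : ℕ) (i : ℕ) : ℕ :=
  if h : i < n ∧ i ∈ J then bEnd J n (i + 1) else i
termination_by n - i
decreasing_by
  have := h.1
  omega

/-- The longest element `w_J` of the parabolic subgroup `W_J ≤ Sₙ`, described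
explicitly as the permutation of `{1, …, n}` reversing each maximal block of
consecutive points linked by the transpositions in `J`. -/
def wJpt (n : ℕ) (J : Finset ℕ) (i : ℕ) : ℕ := bStart J i + bEnd J n i - i

/-- The permutation `ω = w_J ⬝ w_{J ∪ {t}}` (as a right action on points). -/
def omegaPt (n : ℕ) (J : Finset ℕ) (t : ℕ) (i : ℕ) : ℕ :=
  wJpt n (insert t J) (wJpt n J i)

/-- The conjugate `s^ω` of the Coxeter generator `s` by `ω = w_J w_{J∪{t}}`:
the generator whose transposition exchanges the images of `s` and `s+1`. -/
def conjGen (n : ℕ) (J : Finset ℕ) (t : ℕ) (s : ℕ) : ℕ :=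
  min (omegaPt n J t s) (omegaPt n J t (s + 1))

/-- An alley `(J; s₁, …, s_l)`. -/
structure Alley where
  J : Finset ℕ
  s : List ℕ
  deriving DecidableEq

/-- A valid alley for `Sₙ`: `J ⊆ S = {1, …, n−1}` and `s₁, …, s_l` are distinct
elements of `J`. -/
def IsAlley (n : ℕ) (a : Alley) : Prop :=
  a.J ⊆ Finset.Icc 1 (n - 1) ∧ a.s.Nodup ∧ ∀ x ∈ a.s, x ∈ a.J

/-- The action of the Coxeter generator `t` on an alley:
`(J; s₁, …, s_l).t = (J^ω; s₁^ω, …, s_l^ω)` where `ω = w_J w_{J∪{t}}`. -/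
def actAlley (n : ℕ) (t : ℕ) (a : Alley) : Alley :=
  ⟨a.J.image (conjGen n a.J t), a.s.map (conjGen n a.J t)⟩

/-- The action of a word of the free monoid `S*` on alleys. -/
def actWordA (n : ℕ) (a : Alley) (w : List ℕ) : Alley :=
  w.foldl (fun b t => actAlley n t b) a

/-- The defining property of the forest `φ(a)` attached to an alley `a = (J; s₁,…,s_l)`:
it is a labeled forest of length `l` admitting a factorization `X₁ • ⋯ • X_l` into
length-one forests with `s(Xᵢ) = φ(J ∖ {s₁,…,s_{i−1}})` and
`f(Xᵢ) = φ(J ∖ {s₁,…,sᵢ})`; for `l = 0` it is the forest of leaves `φ(J)`. -/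
def AlleySpec (n : ℕ) (a : Alley) (X : List LTree) : Prop :=
  IsLForest X ∧ forestLen X = a.s.length ∧
  ∃ F : List (List LTree), F.length = a.s.length ∧
    (∀ A ∈ F, IsLForest A ∧ forestLen A = 1) ∧
    (∀ (i : ℕ) (h : i < F.length),
      squash (F.get ⟨i, h⟩) = phi n (a.J \ (a.s.take i).toFinset) ∧
      forestFoliage (F.get ⟨i, h⟩) = phi n (a.J \ (a.s.take (i + 1)).toFinset)) ∧
    X = F.foldr bullet (leavesOf (phi n (a.J \ a.s.toFinset)))
/-! ## The descent algebra of the symmetric group -/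

/-- `w ∈ X_J`: every descent of `w` (viewing `w` as a permutation of `{1, …, n}`
via `Fin n`) occurs at a position belonging to `J`. -/
def DescAllowed (n : ℕ) (J : Finset ℕ) (w : Equiv.Perm (Fin n)) : Prop :=
  ∀ i j : Fin n, (i : ℕ) + 1 = (j : ℕ) → w j < w i → ((i : ℕ) + 1) ∈ J

open Classical in
/-- The element `x_J = ∑_{w ∈ X_J} w` of the group algebra of `Sₙ`. -/
noncomputable def xJelt (k : Type) [Semiring k] (n : ℕ) (J : Finset ℕ) :
    MonoidAlgebra k (Equiv.Perm (Fin n)) :=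
  ∑ w : Equiv.Perm (Fin n),
    if DescAllowed n J w then MonoidAlgebra.single w 1 else 0

/-- The descent algebra `Σ(Sₙ)` as a submodule (by Solomon's theorem, a subalgebra)
of the group algebra: the span of the `x_J`, `J ⊆ S`. -/
noncomputable def descentSpan (k : Type) [Semiring k] (n : ℕ) :
    Submodule k (MonoidAlgebra k (Equiv.Perm (Fin n))) :=
  Submodule.span k {x | ∃ J ⊆ Finset.Icc 1 (n - 1), x = xJelt k n J}

/-! ## Spans -/

/-- `kℒₙ`: the span of Pólya orbit sums of labeled forests of value `n`. -/
noncomputable def LspanN (k : Type) [Semiring k] (n : ℕ) :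
    Submodule k ((List LTree) →₀ k) :=
  Submodule.span k {y | ∃ X, IsLForest X ∧ forestValue X = n ∧ y = pol k X}

/-- `kℒ`: the span of Pólya orbit sums of labeled forests. -/
noncomputable def LspanAll (k : Type) [Semiring k] : Submodule k ((List LTree) →₀ k) :=
  Submodule.span k {y | ∃ X, IsLForest X ∧ y = pol k X}

/-- `kℳ`: the span of Pólya orbit sums of unlabeled forests. -/
noncomputable def MspanAll (k : Type) [Semiring k] : Submodule k ((List UTree) →₀ k) :=
  Submodule.span k {y | ∃ X, IsUForest X ∧ y = polU k X}

/-- `kℒ⁺`: the span of Pólya orbit sums of aligned labeled forests. -/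
noncomputable def LplusSpan (k : Type) [Semiring k] : Submodule k ((List LTree) →₀ k) :=
  Submodule.span k {y | ∃ X, IsLForest X ∧ ForestAligned X ∧ y = pol k X}

/-- `kM⁺`: the span of aligned unlabeled forests. -/
noncomputable def MplusSpan (k : Type) [Semiring k] : Submodule k ((List UTree) →₀ k) :=
  Submodule.span k {y | ∃ X, IsUForest X ∧ ForestAlignedU X ∧ y = Finsupp.single X (1 : k)}

/-- The identity element of `kLₙ`: the sum of all compositions of `n`. -/
noncomputable def unitL (k : Type) [Semiring k] (n : ℕ) : (List LTree) →₀ k :=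
  ∑ c : Composition n, Finsupp.single (leavesOf c.blocks) 1

/-- `kQₙ`: the span of the valid paths of the quiver `Qₙ` (partitions of `n`). -/
noncomputable def QspanN (k : Type) [Semiring k] (n : ℕ) : Submodule k (QPath →₀ k) :=
  Submodule.span k
    {y | ∃ P : QPath, P.Valid ∧ P.dest.sum = n ∧ y = Finsupp.single P 1}

/-- The path-algebra product on `kQ`: the concatenation "`P` then `F`" when the
destination of `P` is the source of `F`, and `0` otherwise. -/
noncomputable def mulQ (k : Type) [Semiring k] (f g : QPath →₀ k) : QPath →₀ k :=
  f.sum fun P a => g.sum fun F b =>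
    if F.source = P.dest then Finsupp.single ⟨F.dest, F.steps ++ P.steps⟩ (a * b) else 0

/-! ## The ideals 𝒩 and 𝒥 -/

/-- The generators of the ideal `𝒩`: `(U,V) + (V,U)`. -/
def NGens (k : Type) [Semiring k] : Set ((List UTree) →₀ k) :=
  {g | ∃ U V : UTree, U.leavesPos ∧ V.leavesPos ∧
    g = Finsupp.single [UTree.node U V] 1 + Finsupp.single [UTree.node V U] 1}

/-- The generators of the ideal `𝒥`: the Jacobi sums
`(X,(Y,Z)) + (Y,(Z,X)) + (Z,(X,Y))`. -/
def JGens (k : Type) [Semiring k] : Set ((List UTree) →₀ k) :=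
  {g | ∃ X Y Z : UTree, X.leavesPos ∧ Y.leavesPos ∧ Z.leavesPos ∧
    g = Finsupp.single [UTree.node X (UTree.node Y Z)] 1 +
        Finsupp.single [UTree.node Y (UTree.node Z X)] 1 +
        Finsupp.single [UTree.node Z (UTree.node X Y)] 1}

/-- The two-sided ideal `𝒩 + 𝒥` of `kM` with respect to concatenation. -/
noncomputable def NJideal (k : Type) [Semiring k] : Submodule k ((List UTree) →₀ k) :=
  Submodule.span k {x | ∃ (A B : List UTree) (g : (List UTree) →₀ k),
    (g ∈ NGens k ∨ g ∈ JGens k) ∧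
    x = mulCat k (Finsupp.single A (1 : k)) (mulCat k g (Finsupp.single B 1))}

/-! ## Branch relations -/

/-- The two-term branch relation `[a|b][c|d] − [c|d][a|b]`. -/
noncomputable def Rel1 (k : Type) [Ring k] (a b c d : ℕ) : (List (ℕ × ℕ)) →₀ k :=
  Finsupp.single [(a, b), (c, d)] 1 - Finsupp.single [(c, d), (a, b)] 1

/-- The three-term branch relation
`[a|b][c|d][x|y] + [x|y][a|b][c|d] − [a|b][x|y][c|d] − [c|d][x|y][a|b]`. -/
noncomputable def Rel2 (k : Type) [Ring k] (a b c d x y : ℕ) : (List (ℕ × ℕ)) →₀ k :=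
  Finsupp.single [(a, b), (c, d), (x, y)] 1 + Finsupp.single [(x, y), (a, b), (c, d)] 1
  - Finsupp.single [(a, b), (x, y), (c, d)] 1 - Finsupp.single [(c, d), (x, y), (a, b)] 1

/-- The side condition on `a, b, c, d`: positive, `a < b`, `c < d`,
`a+b ∉ {c,d}` and `c+d ∉ {a,b}`. -/
def Cond1 (a b c d : ℕ) : Prop :=
  0 < a ∧ a < b ∧ 0 < c ∧ c < d ∧ a + b ≠ c ∧ a + b ≠ d ∧ c + d ≠ a ∧ c + d ≠ b

/-- The set `ℛ ⊆ kℬ*` of branch relations. -/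
noncomputable def BranchRels (k : Type) [Ring k] : Set ((List (ℕ × ℕ)) →₀ k) :=
  {r | ∃ a b c d, Cond1 a b c d ∧ r = Rel1 k a b c d} ∪
  {r | ∃ a b c d x y, Cond1 a b c d ∧ 0 < x ∧ x < y ∧
    ((a + b = c + d ∧ (a + b = x ∨ a + b = y)) ∨
      ((x + y = a ∨ x + y = b) ∧ (x + y = c ∨ x + y = d))) ∧
    r = Rel2 k a b c d x y}

/-!
A length-one labeled forest is determined by its squash and foliage, so the factorization
defining `φ` forces `φ(J; s₁, …, s_l) = X₁ • φ(J ∖ {s₁}; s₂, …, s_l)`. Unwinding this recursion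
describes `φ(a)` explicitly: its parts are the trees over the gaps `(e, f]` between consecutive
points of `{0} ∪ (S ∖ J) ∪ {n}`, each cut successively at the points `sᵢ` inside it, the cut at
`sᵢ` being the node labelled `i`.

The node labelled `1` is therefore the root over the gap `(e, f)` containing `s₁`, and
`δ(φ(a)) = Y − Y.(i, i+1)` where `Y = φ(J ∖ {s₁}; s₂, …)` has its `i`-th and `(i+1)`-st parts over
`(e, s₁]` and `(s₁, f]`. On the other hand `ω = w_{J∖{s₁}} w_J` fixes the other gaps and
exchanges these two segments of `(e, f]` by translations, so conjugating the cut points by `ω`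
exchanges the two trees: `Y.(i, i+1) = φ((J ∖ {s₁}; s₂, …).s₁)`.
-/

namespace AlleyForest

open LTree

/-! ### Gaps -/

lemma exists_eq_append_of_pairwise {l : List ℕ} (hl : l.Pairwise (· < ·)) (s : ℕ) :
    ∃ l₁ l₂, l = l₁ ++ l₂ ∧ (∀ x ∈ l₁, x < s) ∧ ∀ x ∈ l₂, s ≤ x := by
  induction l with
  | nil => exact ⟨[], [], rfl, by simp, by simp⟩
  | cons a l ih =>
    obtain ⟨hal, hl⟩ := List.pairwise_cons.1 hl
    by_cases has : a < s
    · obtain ⟨l₁, l₂, rfl, h₁, h₂⟩ := ih hl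
      exact ⟨a :: l₁, l₂, rfl, by simpa [has] using h₁, h₂⟩
    · refine ⟨[], a :: l, rfl, by simp, fun x hx => ?_⟩
      rcases List.mem_cons.1 hx with rfl | hx
      · exact not_lt.1 has
      · exact (not_lt.1 has).trans (hal x hx).le

lemma le_getLastD_of_pairwise {l : List ℕ} (hl : l.Pairwise (· < ·)) {x : ℕ} (hx : x ∈ l)
    (d : ℕ) : x ≤ l.getLastD d := by
  induction l generalizing d with
  | nil => simp at hx
  | cons a l ih =>
    obtain ⟨hal, hl⟩ := List.pairwise_cons.1 hl
    rw [List.getLastD_cons]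
    rcases List.mem_cons.1 hx with rfl | hx
    · rcases List.mem_cons.1 (List.getLastD_mem_cons (l := l) (a := x)) with h | h
      · exact h.ge
      · exact (hal _ h).le
    · exact ih hl hx a

lemma headD_le_of_pairwise {l : List ℕ} (hl : l.Pairwise (· < ·)) {x : ℕ} (hx : x ∈ l)
    (d : ℕ) : l.headD d ≤ x := by
  cases l with
  | nil => simp at hx
  | cons a l =>
    rcases List.mem_cons.1 hx with rfl | hx
    · exact le_rfl
    · exact (List.pairwise_cons.1 hl).1 x hx |>.le

lemma sort_insert_eq_append {C : Finset ℕ} {l₁ l₂ : List ℕ} {q : ℕ}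
    (hC : C.sort (· ≤ ·) = l₁ ++ l₂) (h₁ : ∀ x ∈ l₁, x < q) (h₂ : ∀ x ∈ l₂, q < x) :
    (insert q C).sort (· ≤ ·) = l₁ ++ q :: l₂ := by
  have hq : q ∉ C := fun hq => by
    rcases List.mem_append.1 (hC ▸ (Finset.mem_sort _).2 hq) with h | h
    exacts [lt_irrefl _ (h₁ q h), lt_irrefl _ (h₂ q h)]
  have hsorted : (l₁ ++ l₂).Pairwise (· ≤ ·) := hC ▸ Finset.pairwise_sort _ _
  rw [List.pairwise_append] at hsorted
  refine List.Perm.eq_of_pairwise' (Finset.pairwise_sort _ _) ?_ ?_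
  · refine List.pairwise_append.2 ⟨hsorted.1,
      List.pairwise_cons.2 ⟨fun x hx => (h₂ x hx).le, hsorted.2.1⟩, fun a ha b hb => ?_⟩
    rcases List.mem_cons.1 hb with rfl | hb
    exacts [(h₁ a ha).le, hsorted.2.2 a ha b hb]
  · have hCl : C.toList.Perm (l₁ ++ l₂) := hC ▸ (Finset.sort_perm_toList C _).symm
    exact ((Finset.sort_perm_toList _ _).trans (Finset.toList_insert hq)).trans
      ((hCl.cons q).trans List.perm_middle.symm)

lemma zip_cons_append {α : Type*} (n : α) : ∀ (e : α) (l₁ l₂ : List α),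
    List.zip (e :: (l₁ ++ l₂)) (l₁ ++ l₂ ++ [n]) =
      List.zip (e :: l₁) l₁ ++ (l₁.getLastD e, l₂.headD n) :: List.zip l₂ (l₂.tail ++ [n])
  | _, [], [] => rfl
  | _, [], _ :: _ => rfl
  | e, x :: l₁, l₂ => by
    simp only [List.cons_append, List.zip_cons_cons, List.getLastD_cons,
      zip_cons_append n x l₁ l₂]

def gapPoints (n : ℕ) (J : Finset ℕ) : List ℕ := ((Finset.Icc 1 (n - 1)) \ J).sort (· ≤ ·)

/-- The consecutive pairs `(e, f)` of `0 < t₁ < ⋯ < t_{j-1} < n`, where `S ∖ J = {t₁, …}`. -/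
def gaps (n : ℕ) (J : Finset ℕ) : List (ℕ × ℕ) :=
  List.zip (0 :: gapPoints n J) (gapPoints n J ++ [n])

lemma phi_eq_map_gaps (n : ℕ) (J : Finset ℕ) : phi n J = (gaps n J).map fun g => g.2 - g.1 :=
  List.map_uncurry_zip_eq_zipWith.symm

lemma gapPoints_erase {n q : ℕ} {J : Finset ℕ} {l₁ l₂ : List ℕ}
    (hq : q ∈ Finset.Icc 1 (n - 1)) (h : gapPoints n J = l₁ ++ l₂)
    (h₁ : ∀ x ∈ l₁, x < q) (h₂ : ∀ x ∈ l₂, q < x) :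
    gapPoints n (J.erase q) = l₁ ++ q :: l₂ := by
  rw [gapPoints, Finset.sdiff_erase hq]
  exact sort_insert_eq_append h h₁ h₂

/-- `(e, f)` is one of the `gaps n J`. -/
structure IsGap (n : ℕ) (J : Finset ℕ) (e f : ℕ) : Prop where
  lt : e < f
  le_n : f ≤ n
  left_notMem : e ∉ J
  right_notMem : f ∉ J
  mem : ∀ w, e < w → w < f → w ∈ J

/-- The gap `(e, f)` of `J`, with the gaps `A` to its left and `B` to its right; cutting it at
any point `q` gives the gaps of `J ∖ {q}`. -/
structure GapSplit (n : ℕ) (J : Finset ℕ) (A : List (ℕ × ℕ)) (e f : ℕ) (B : List (ℕ × ℕ)) : Prop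
    extends IsGap n J e f where
  le_of_mem_left : ∀ g ∈ A, g.2 ≤ e
  le_of_mem_right : ∀ g ∈ B, f ≤ g.1
  gaps_eq : gaps n J = A ++ (e, f) :: B
  gaps_erase : ∀ q, e < q → q < f → gaps n (J.erase q) = A ++ (e, q) :: (q, f) :: B

lemma mem_gapPoints {n x : ℕ} {J : Finset ℕ} :
    x ∈ gapPoints n J ↔ x ∈ Finset.Icc 1 (n - 1) ∧ x ∉ J := by
  rw [gapPoints, Finset.mem_sort, Finset.mem_sdiff]

lemma exists_gapPoints_eq_append {n s : ℕ} {J : Finset ℕ} (hs : s ∈ J) :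
    ∃ l₁ l₂, gapPoints n J = l₁ ++ l₂ ∧ l₁.Pairwise (· < ·) ∧ l₂.Pairwise (· < ·) ∧
      (∀ x ∈ l₁, x < s) ∧ ∀ x ∈ l₂, s < x := by
  have hsorted : (gapPoints n J).Pairwise (· < ·) := (Finset.sortedLT_sort _).pairwise
  obtain ⟨l₁, l₂, hsplit, h₁, h₂⟩ := exists_eq_append_of_pairwise hsorted s
  rw [hsplit, List.pairwise_append] at hsorted
  refine ⟨l₁, l₂, hsplit, hsorted.1, hsorted.2.1, h₁, fun x hx => (h₂ x hx).lt_of_ne ?_⟩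
  rintro rfl
  exact (mem_gapPoints.1 (hsplit ▸ List.mem_append_right _ hx)).2 hs

lemma isGap_of_gapPoints_eq_append {n s : ℕ} {J : Finset ℕ} {l₁ l₂ : List ℕ}
    (hJ : J ⊆ Finset.Icc 1 (n - 1)) (hs : s ∈ J) (h : gapPoints n J = l₁ ++ l₂)
    (hl₁ : l₁.Pairwise (· < ·)) (hl₂ : l₂.Pairwise (· < ·))
    (h₁ : ∀ x ∈ l₁, x < s) (h₂ : ∀ x ∈ l₂, s < x) :
    IsGap n J (l₁.getLastD 0) (l₂.headD n) ∧ l₁.getLastD 0 < s ∧ s < l₂.headD n := by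
  obtain ⟨hs1, hsn⟩ := Finset.mem_Icc.1 (hJ hs)
  have hmem₁ : ∀ x ∈ l₁, x ∈ Finset.Icc 1 (n - 1) ∧ x ∉ J :=
    fun x hx => mem_gapPoints.1 (h ▸ List.mem_append_left _ hx)
  have hmem₂ : ∀ x ∈ l₂, x ∈ Finset.Icc 1 (n - 1) ∧ x ∉ J :=
    fun x hx => mem_gapPoints.1 (h ▸ List.mem_append_right _ hx)
  have he : l₁.getLastD 0 < s ∧ l₁.getLastD 0 ∉ J := by
    rcases List.mem_cons.1 (List.getLastD_mem_cons (l := l₁) (a := 0)) with he | he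
    · exact ⟨by omega, fun hmem => by have := Finset.mem_Icc.1 (hJ hmem); omega⟩
    · exact ⟨h₁ _ he, (hmem₁ _ he).2⟩
  have hf : s < l₂.headD n ∧ l₂.headD n ≤ n ∧ l₂.headD n ∉ J := by
    cases l₂ with
    | nil =>
      simp only [List.headD_nil]
      exact ⟨by omega, le_rfl, fun hmem => by have := Finset.mem_Icc.1 (hJ hmem); omega⟩
    | cons x l₂ =>
      have := Finset.mem_Icc.1 (hmem₂ x List.mem_cons_self).1
      simp only [List.headD_cons]
      exact ⟨h₂ x List.mem_cons_self, by omega, (hmem₂ x List.mem_cons_self).2⟩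
  refine ⟨⟨he.1.trans hf.1, hf.2.1, he.2, hf.2.2, fun w hew hwf => ?_⟩, he.1, hf.1⟩
  by_contra hw
  have hw' : w ∈ l₁ ++ l₂ := h ▸ mem_gapPoints.2 ⟨Finset.mem_Icc.2 ⟨by omega, by omega⟩, hw⟩
  rcases List.mem_append.1 hw' with hw' | hw'
  · exact absurd (le_getLastD_of_pairwise hl₁ hw' 0) (by omega)
  · exact absurd (headD_le_of_pairwise hl₂ hw' n) (by omega)

theorem exists_gapSplit {n : ℕ} {J : Finset ℕ} (hJ : J ⊆ Finset.Icc 1 (n - 1)) {s : ℕ}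
    (hs : s ∈ J) : ∃ A e f B, GapSplit n J A e f B ∧ e < s ∧ s < f := by
  obtain ⟨l₁, l₂, hsplit, hl₁, hl₂, h₁, h₂⟩ := exists_gapPoints_eq_append (n := n) hs
  obtain ⟨hgap, hes, hsf⟩ := isGap_of_gapPoints_eq_append hJ hs hsplit hl₁ hl₂ h₁ h₂
  have hle : ∀ x ∈ l₁, x ≤ l₁.getLastD 0 := fun x hx => le_getLastD_of_pairwise hl₁ hx 0
  have hge : ∀ x ∈ l₂, l₂.headD n ≤ x := fun x hx => headD_le_of_pairwise hl₂ hx n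
  refine ⟨List.zip (0 :: l₁) l₁, _, _, List.zip l₂ (l₂.tail ++ [n]), ⟨hgap,
    fun g hg => hle g.2 (List.of_mem_zip hg).2, fun g hg => hge g.1 (List.of_mem_zip hg).1,
    ?_, fun q heq hqf => ?_⟩, hes, hsf⟩
  · rw [gaps, hsplit]
    exact zip_cons_append n 0 l₁ l₂
  · have := hgap.le_n
    rw [gaps, gapPoints_erase (Finset.mem_Icc.2 ⟨by omega, by omega⟩) hsplit
      (fun x hx => (hle x hx).trans_lt heq) (fun x hx => hqf.trans_le (hge x hx)),
      zip_cons_append n 0 l₁ (q :: l₂)]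
    exact congrArg _ (congrArg _ (zip_cons_append n q [] l₂))

/-! ### Blocks and the conjugation `s ↦ s^ω` -/

/-- `[u, v]` is a maximal block of consecutive points of `{1, …, n}` linked by `J`. -/
structure IsBlock (n : ℕ) (J : Finset ℕ) (u v : ℕ) : Prop where
  one_le : 1 ≤ u
  le : u ≤ v
  le_n : v ≤ n
  mem : ∀ w, u ≤ w → w < v → w ∈ J
  left_end : u = 1 ∨ u - 1 ∉ J
  right_end : v = n ∨ v ∉ J

section Blocks

variable {n : ℕ} {J : Finset ℕ}

lemma bStart_le : ∀ i, bStart J i ≤ i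
  | 0 | 1 => le_rfl
  | i + 2 => by
    rw [bStart]
    split_ifs
    exacts [(bStart_le (i + 1)).trans (by omega), le_rfl]

lemma one_le_bStart : ∀ i, 1 ≤ i → 1 ≤ bStart J i
  | 0, h => h
  | 1, _ => le_rfl
  | i + 2, _ => by
    rw [bStart]
    split_ifs
    exacts [one_le_bStart (i + 1) (by omega), by omega]

lemma mem_of_bStart_le : ∀ i w, bStart J i ≤ w → w < i → w ∈ J
  | 0, _, _, h => absurd h (Nat.not_lt_zero _)
  | 1, w, h₁, h₂ => by simp only [bStart] at h₁; omega
  | i + 2, w, h₁, h₂ => by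
    rw [bStart] at h₁
    split_ifs at h₁ with hi
    · rcases Nat.lt_or_ge w (i + 1) with hw | hw
      · exact mem_of_bStart_le (i + 1) w h₁ hw
      · exact (show w = i + 1 by omega) ▸ hi
    · omega

lemma bStart_left_end : ∀ i, bStart J i ≤ 1 ∨ bStart J i - 1 ∉ J
  | 0 | 1 => Or.inl (by simp [bStart])
  | i + 2 => by
    rw [bStart]
    split_ifs with hi
    exacts [bStart_left_end (i + 1), Or.inr hi]

lemma bStart_eq_of_isBlock {u v : ℕ} (h : IsBlock n J u v) :
    ∀ i, u ≤ i → i ≤ v → bStart J i = u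
  | 0, hi, _ => by have := h.one_le; omega
  | 1, hi, _ => by simp only [bStart]; have := h.one_le; omega
  | i + 2, hi, hiv => by
    rw [bStart]
    split_ifs with hmem
    · refine bStart_eq_of_isBlock h (i + 1) ?_ (by omega)
      by_contra hlt
      have hu : u = i + 2 := by omega
      rcases h.left_end with h1 | h1
      · omega
      · exact h1 (by rwa [hu])
    · by_contra hne
      exact hmem (h.mem (i + 1) (by omega) (by omega))

lemma le_bEnd (i : ℕ) : i ≤ bEnd J n i := by
  rw [bEnd]
  split_ifs with h
  · exact (Nat.le_succ i).trans (le_bEnd (i + 1))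
  · exact le_rfl
termination_by n - i
decreasing_by have := h.1; omega

lemma bEnd_le {i : ℕ} (hi : i ≤ n) : bEnd J n i ≤ n := by
  rw [bEnd]
  split_ifs with h
  exacts [bEnd_le h.1, hi]
termination_by n - i
decreasing_by have := h.1; omega

lemma mem_of_lt_bEnd {i w : ℕ} (hiw : i ≤ w) (hw : w < bEnd J n i) : w ∈ J := by
  rw [bEnd] at hw
  split_ifs at hw with h
  · rcases hiw.eq_or_lt with rfl | hlt
    exacts [h.2, mem_of_lt_bEnd hlt hw]
  · omega
termination_by n - i
decreasing_by have := h.1; omega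

lemma bEnd_right_end (i : ℕ) : ¬(bEnd J n i < n ∧ bEnd J n i ∈ J) := by
  rw [bEnd]
  split_ifs with h
  exacts [bEnd_right_end (i + 1), h]
termination_by n - i
decreasing_by have := h.1; omega

lemma bEnd_eq_of_isBlock {u v : ℕ} (h : IsBlock n J u v) {i : ℕ} (hui : u ≤ i) (hi : i ≤ v) :
    bEnd J n i = v := by
  rw [bEnd]
  rcases hi.lt_or_eq with hlt | rfl
  · rw [dif_pos ⟨hlt.trans_le h.le_n, h.mem i hui hlt⟩]
    exact bEnd_eq_of_isBlock h (by omega) hlt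
  · rw [dif_neg fun hlt => h.right_end.elim (fun h1 => by omega) (· hlt.2)]
termination_by v - i

lemma wJpt_of_isBlock {u v i : ℕ} (h : IsBlock n J u v) (hui : u ≤ i) (hiv : i ≤ v) :
    wJpt n J i = u + v - i := by
  rw [wJpt, bStart_eq_of_isBlock h i hui hiv, bEnd_eq_of_isBlock h hui hiv]

lemma isBlock_bStart_bEnd {i : ℕ} (hi : 1 ≤ i) (hin : i ≤ n) :
    IsBlock n J (bStart J i) (bEnd J n i) where
  one_le := one_le_bStart i hi
  le := (bStart_le i).trans (le_bEnd i)
  le_n := bEnd_le hin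
  mem w hw₁ hw₂ := (Nat.lt_or_ge w i).elim (mem_of_bStart_le i w hw₁) (mem_of_lt_bEnd · hw₂)
  left_end := (bStart_left_end i).imp_left fun h => le_antisymm h (one_le_bStart i hi)
  right_end := by
    by_cases hv : bEnd J n i < n
    · exact Or.inr fun hm => bEnd_right_end i ⟨hv, hm⟩
    · exact Or.inl (le_antisymm (bEnd_le hin) (not_lt.1 hv))

lemma IsBlock.of_erase {t u v : ℕ} (h : IsBlock n (J.erase t) u v) (hu : u ≠ t + 1)
    (hv : v ≠ t) : IsBlock n J u v where
  one_le := h.one_le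
  le := h.le
  le_n := h.le_n
  mem w hw₁ hw₂ := Finset.mem_of_mem_erase (h.mem w hw₁ hw₂)
  left_end := h.left_end.imp_right fun h' h'' =>
    h' (Finset.mem_erase.2 ⟨by have := h.one_le; omega, h''⟩)
  right_end := h.right_end.imp_right fun h' h'' => h' (Finset.mem_erase.2 ⟨hv, h''⟩)

end Blocks

section Conjugation

variable {n : ℕ} {J : Finset ℕ} {e f t : ℕ}

lemma omegaPt_erase (ht : t ∈ J) (i : ℕ) :
    omegaPt n (J.erase t) t i = wJpt n J (wJpt n (J.erase t) i) := by
  rw [omegaPt, Finset.insert_erase ht]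

namespace IsGap

lemma ne_of_mem (h : IsGap n J e f) {s : ℕ} (hs : s ∈ J) : s ≠ e ∧ s ≠ f :=
  ⟨fun he => h.left_notMem (he ▸ hs), fun hf => h.right_notMem (hf ▸ hs)⟩

lemma isBlock (h : IsGap n J e f) : IsBlock n J (e + 1) f where
  one_le := by omega
  le := h.lt
  le_n := h.le_n
  mem w hw₁ hw₂ := h.mem w hw₁ hw₂
  left_end := Or.inr (by simpa using h.left_notMem)
  right_end := Or.inr h.right_notMem

lemma isBlock_erase_left (h : IsGap n J e f) (het : e < t) (htf : t < f) :
    IsBlock n (J.erase t) (e + 1) t where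
  one_le := by omega
  le := het
  le_n := (htf.trans_le h.le_n).le
  mem w hw₁ hw₂ := Finset.mem_erase.2 ⟨hw₂.ne, h.mem w hw₁ (hw₂.trans htf)⟩
  left_end := Or.inr fun he => h.left_notMem (Finset.mem_of_mem_erase (by simpa using he))
  right_end := Or.inr (Finset.notMem_erase t J)

lemma isBlock_erase_right (h : IsGap n J e f) (het : e < t) (htf : t < f) :
    IsBlock n (J.erase t) (t + 1) f where
  one_le := by omega
  le := htf
  le_n := h.le_n
  mem w hw₁ hw₂ := Finset.mem_erase.2 ⟨by omega, h.mem w (by omega) hw₂⟩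
  left_end := Or.inr (by simp)
  right_end := Or.inr fun hf => h.right_notMem (Finset.mem_of_mem_erase hf)

lemma omegaPt_of_left_part (h : IsGap n J e f) (het : e < t) (htf : t < f) {i : ℕ}
    (hei : e < i) (hit : i ≤ t) : omegaPt n (J.erase t) t i = i + f - t := by
  rw [omegaPt_erase (h.mem t het htf), wJpt_of_isBlock (h.isBlock_erase_left het htf) hei hit,
    wJpt_of_isBlock h.isBlock (by omega) (by omega)]
  omega

lemma omegaPt_of_right_part (h : IsGap n J e f) (het : e < t) (htf : t < f) {i : ℕ}
    (hti : t < i) (hif : i ≤ f) : omegaPt n (J.erase t) t i = i + e - t := by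
  rw [omegaPt_erase (h.mem t het htf), wJpt_of_isBlock (h.isBlock_erase_right het htf) hti hif,
    wJpt_of_isBlock h.isBlock (by omega) (by omega)]
  omega

/-- Outside the gap, the `J ∖ {t}`-block of `i` is also its `J`-block, and `ω` fixes `i`. -/
lemma omegaPt_eq_self (h : IsGap n J e f) (het : e < t) (htf : t < f) {i : ℕ} (hi : 1 ≤ i)
    (hin : i ≤ n) (hout : i ≤ e ∨ f < i) : omegaPt n (J.erase t) t i = i := by
  have hb := isBlock_bStart_bEnd (J := J.erase t) hi hin
  have hui : bStart (J.erase t) i ≤ i := bStart_le i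
  have hiv : i ≤ bEnd (J.erase t) n i := le_bEnd i
  have hout' : bEnd (J.erase t) n i ≤ e ∨ f < bStart (J.erase t) i := by
    refine hout.imp (fun hie => ?_) (fun hfi => ?_) <;> by_contra hc
    · exact h.left_notMem (Finset.mem_of_mem_erase (hb.mem e (by omega) (by omega)))
    · exact h.right_notMem (Finset.mem_of_mem_erase (hb.mem f (by omega) (by omega)))
  rw [omegaPt_erase (h.mem t het htf), wJpt_of_isBlock hb hui hiv,
    wJpt_of_isBlock (hb.of_erase (by omega) (by omega)) (by omega) (by omega)]
  omega

lemma conjGen_eq (hJ : J ⊆ Finset.Icc 1 (n - 1)) (h : IsGap n J e f) (het : e < t)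
    (htf : t < f) {s : ℕ} (hs : s ∈ J) (hst : s ≠ t) :
    conjGen n (J.erase t) t s =
      if s < e then s else if s < t then s + f - t else if s < f then s + e - t else s := by
  obtain ⟨hs1, hsn⟩ := Finset.mem_Icc.1 (hJ hs)
  have := h.ne_of_mem hs
  have := h.le_n
  rw [conjGen]
  split_ifs with h₁ h₂ h₃
  · rw [h.omegaPt_eq_self het htf hs1 (by omega) (.inl h₁.le),
      h.omegaPt_eq_self het htf (by omega) (by omega) (.inl h₁)]
    omega
  · rw [h.omegaPt_of_left_part het htf (by omega) h₂.le,
      h.omegaPt_of_left_part het htf (by omega) h₂]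
    omega
  · rw [h.omegaPt_of_right_part het htf (by omega) h₃.le,
      h.omegaPt_of_right_part het htf (by omega) h₃]
    omega
  · rw [h.omegaPt_eq_self het htf hs1 (by omega) (.inr (by omega)),
      h.omegaPt_eq_self het htf (by omega) (by omega) (.inr (by omega))]
    omega

lemma conjGen_injOn (hJ : J ⊆ Finset.Icc 1 (n - 1)) (h : IsGap n J e f) (het : e < t)
    (htf : t < f) : Set.InjOn (conjGen n (J.erase t) t) (J.erase t) := by
  intro x hx y hy hxy
  obtain ⟨hxt, hxJ⟩ := Finset.mem_erase.1 hx
  obtain ⟨hyt, hyJ⟩ := Finset.mem_erase.1 hy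
  have := h.ne_of_mem hxJ
  have := h.ne_of_mem hyJ
  rw [h.conjGen_eq hJ het htf hxJ hxt, h.conjGen_eq hJ het htf hyJ hyt] at hxy
  split_ifs at hxy <;> omega

lemma conjGen_mem (hJ : J ⊆ Finset.Icc 1 (n - 1)) (h : IsGap n J e f) (het : e < t)
    (htf : t < f) {s : ℕ} (hs : s ∈ J.erase t) :
    conjGen n (J.erase t) t s ∈ J.erase (e + f - t) := by
  obtain ⟨hst, hsJ⟩ := Finset.mem_erase.1 hs
  have := h.ne_of_mem hsJ
  rw [h.conjGen_eq hJ het htf hsJ hst]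
  split_ifs <;> refine Finset.mem_erase.2 ⟨by omega, ?_⟩
  exacts [hsJ, h.mem _ (by omega) (by omega), h.mem _ (by omega) (by omega), hsJ]

lemma image_conjGen (hJ : J ⊆ Finset.Icc 1 (n - 1)) (h : IsGap n J e f) (het : e < t)
    (htf : t < f) : (J.erase t).image (conjGen n (J.erase t) t) = J.erase (e + f - t) := by
  refine Finset.eq_of_subset_of_card_le
    (Finset.image_subset_iff.2 fun s hs => h.conjGen_mem hJ het htf hs) ?_
  rw [Finset.card_image_of_injOn (h.conjGen_injOn hJ het htf),
    Finset.card_erase_of_mem (h.mem t het htf),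
    Finset.card_erase_of_mem (h.mem _ (by omega) (by omega))]

lemma actAlley_erase (hJ : J ⊆ Finset.Icc 1 (n - 1)) (h : IsGap n J e f) (het : e < t)
    (htf : t < f) (r : List ℕ) :
    actAlley n t ⟨J.erase t, r⟩ = ⟨J.erase (e + f - t), r.map (conjGen n (J.erase t) t)⟩ := by
  simp only [actAlley, h.image_conjGen hJ het htf]

lemma isAlley_actAlley (hJ : J ⊆ Finset.Icc 1 (n - 1)) (h : IsGap n J e f) (het : e < t)
    (htf : t < f) {r : List ℕ} (hr : IsAlley n ⟨J.erase t, r⟩) :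
    IsAlley n (actAlley n t ⟨J.erase t, r⟩) := by
  rw [h.actAlley_erase hJ het htf]
  refine ⟨(Finset.erase_subset _ _).trans hJ,
    hr.2.1.map_on fun x hx y hy => h.conjGen_injOn hJ het htf (hr.2.2 x hx) (hr.2.2 y hy),
    fun x hx => ?_⟩
  obtain ⟨y, hy, rfl⟩ := List.mem_map.1 hx
  exact h.conjGen_mem hJ het htf (hr.2.2 y hy)

end IsGap

end Conjugation

/-! ### Cutting the gaps -/

/-- The tree over `(e, f]` cut at those points `s` of the pairs `(s, i)` that lie inside it,
the cut at `s` being the node labelled `i`. -/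
def cutTree : ℕ → ℕ → List (ℕ × ℕ) → LTree
  | e, f, [] => leaf (f - e)
  | e, f, (s, i) :: l =>
    if e < s ∧ s < f then node i (cutTree e s l) (cutTree s f l) else cutTree e f l

lemma cutTree_zipIdx_succ (r : List ℕ) (e f k : ℕ) :
    cutTree e f (r.zipIdx (k + 1)) = (cutTree e f (r.zipIdx k)).shift 1 := by
  induction r generalizing e f k with
  | nil => rfl
  | cons s r ih =>
    simp only [List.zipIdx_cons, cutTree]
    split_ifs
    · simp only [shift, ih]
    · exact ih e f (k + 1)

lemma le_of_rootLabel?_cutTree_zipIdx {r : List ℕ} {e f k i : ℕ}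
    (h : (cutTree e f (r.zipIdx k)).rootLabel? = some i) : k ≤ i := by
  induction r generalizing e f k with
  | nil => simp [cutTree, rootLabel?] at h
  | cons s r ih =>
    simp only [List.zipIdx_cons, cutTree] at h
    split_ifs at h
    · simp only [rootLabel?, Option.some.injEq] at h
      exact h.le
    · exact (ih h).trans' (Nat.le_succ k)

/-- `cutTree` only sees the relative position of the cut points inside the interval: moving
them by the translation `(e, f) → (e', f')` and keeping the others outside does not change it. -/
theorem cutTree_map_fst {g : ℕ → ℕ} : ∀ {e f e' f' : ℕ} (l : List (ℕ × ℕ)), f + e' = f' + e →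
    (∀ p ∈ l, (e < p.1 ∧ p.1 < f → g p.1 + e = p.1 + e') ∧
      (¬(e < p.1 ∧ p.1 < f) → ¬(e' < g p.1 ∧ g p.1 < f'))) →
    cutTree e' f' (l.map (Prod.map g id)) = cutTree e f l
  | e, f, e', f', [], hlen, _ => by
    simp only [List.map_nil, cutTree]
    congr 1
    omega
  | e, f, e', f', (s, i) :: l, hlen, hl => by
    have hin : e < s ∧ s < f → g s + e = s + e' := (hl (s, i) List.mem_cons_self).1
    have hout : ¬(e < s ∧ s < f) → ¬(e' < g s ∧ g s < f') := (hl (s, i) List.mem_cons_self).2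
    have hl' := fun p hp => hl p (List.mem_cons_of_mem _ hp)
    simp only [List.map_cons, Prod.map, id, cutTree]
    by_cases hs : e < s ∧ s < f
    · have hgs := hin hs
      rw [if_pos hs, if_pos (by omega), cutTree_map_fst (e := e) (f := s) l (by omega) ?_,
        cutTree_map_fst (e := s) (f := f) l (by omega) ?_]
      all_goals
        intro p hp
        obtain ⟨h₁, h₂⟩ := hl' p hp
        by_cases hp' : e < p.1 ∧ p.1 < f
        · have := h₁ hp'
          constructor <;> intro <;> omega
        · have := h₂ hp'
          constructor <;> intro <;> omega
    · rw [if_neg hs, if_neg (hout hs)]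
      exact cutTree_map_fst l hlen hl'

def gapForest (n : ℕ) (K : Finset ℕ) (r : List ℕ) : List LTree :=
  (gaps n K).map fun g => cutTree g.1 g.2 (r.zipIdx 1)

namespace GapSplit

variable {n : ℕ} {J : Finset ℕ} {A B : List (ℕ × ℕ)} {e f : ℕ}

lemma gapForest_erase (h : GapSplit n J A e f B) {q : ℕ} (heq : e < q) (hqf : q < f)
    (r : List ℕ) :
    gapForest n (J.erase q) r =
      A.map (fun g => cutTree g.1 g.2 (r.zipIdx 1)) ++
        cutTree e q (r.zipIdx 1) :: cutTree q f (r.zipIdx 1) ::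
          B.map (fun g => cutTree g.1 g.2 (r.zipIdx 1)) := by
  rw [gapForest, h.gaps_erase q heq hqf, List.map_append, List.map_cons, List.map_cons]

lemma gapForest_cons (h : GapSplit n J A e f B) {s : ℕ} (hes : e < s) (hsf : s < f)
    (r : List ℕ) :
    gapForest n J (s :: r) =
      (A.map fun g => cutTree g.1 g.2 (r.zipIdx 1)).map (shift 1) ++
        node 1 ((cutTree e s (r.zipIdx 1)).shift 1) ((cutTree s f (r.zipIdx 1)).shift 1) ::
          (B.map fun g => cutTree g.1 g.2 (r.zipIdx 1)).map (shift 1) := by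
  simp only [gapForest, h.gaps_eq, List.zipIdx_cons, cutTree, ← cutTree_zipIdx_succ,
    List.map_append, List.map_cons, List.map_map, Function.comp_def]
  rw [if_pos ⟨hes, hsf⟩]
  congr 1
  · refine List.map_congr_left fun g hg => if_neg fun hs => ?_
    have := h.le_of_mem_left g hg
    omega
  · congr 1
    refine List.map_congr_left fun g hg => if_neg fun hs => ?_
    have := h.le_of_mem_right g hg
    omega

end GapSplit

/-! ### The operator `δ` -/

lemma splitAt1_leavesOf : ∀ c : List ℕ, splitAt1 (leavesOf c) = none
  | [] => rfl
  | x :: c => by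
    change splitAt1 (leaf x :: leavesOf c) = none
    simp [splitAt1, splitAt1_leavesOf c]

lemma deltaF_leavesOf (k : Type) [Ring k] (c : List ℕ) :
    deltaF k (leavesOf c) = Finsupp.single (leavesOf c) 1 := by
  rw [deltaF, splitAt1_leavesOf]

lemma splitAt1_append_node {U V : LTree} {Y₂ : List LTree} :
    ∀ {Y₁ : List LTree}, (∀ T ∈ Y₁, T.rootLabel? ≠ some 1) →
      splitAt1 (Y₁ ++ node 1 U V :: Y₂) = some (Y₁.length, Y₁ ++ U :: V :: Y₂)
  | [], _ => by simp [splitAt1]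
  | leaf x :: Y₁, hY => by
    simp [splitAt1, splitAt1_append_node fun T hT => hY T (List.mem_cons_of_mem _ hT)]
  | node j T₁ T₂ :: Y₁, hY => by
    have hj : j ≠ 1 := fun hj => hY _ List.mem_cons_self (by simp [rootLabel?, hj])
    simp [splitAt1, hj, splitAt1_append_node fun T hT => hY T (List.mem_cons_of_mem _ hT)]

lemma dec_shift_one : ∀ T : LTree, (T.shift 1).dec = T
  | leaf _ => rfl
  | node i T₁ T₂ => by simp [shift, dec, dec_shift_one T₁, dec_shift_one T₂]

lemma swapAdj_append {α : Type} {x y : α} {L₂ : List α} :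
    ∀ {m : ℕ} (L₁ : List α), L₁.length = m → swapAdj m (L₁ ++ x :: y :: L₂) = L₁ ++ y :: x :: L₂
  | _, [], rfl => rfl
  | _, a :: L₁, rfl => by simp [swapAdj, swapAdj_append L₁ rfl]

/-- The node labelled `1` is the root over the gap cut at `s`; removing it leaves the
forest of `J ∖ {s}`. -/
theorem GapSplit.deltaF_gapForest_cons (k : Type) [Ring k] {n : ℕ} {J : Finset ℕ}
    {A B : List (ℕ × ℕ)} {e f s : ℕ} (h : GapSplit n J A e f B) (hes : e < s) (hsf : s < f)
    (r : List ℕ) :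
    deltaF k (gapForest n J (s :: r)) =
      Finsupp.single (gapForest n (J.erase s) r) 1 -
        Finsupp.single (swapAdj A.length (gapForest n (J.erase s) r)) 1 := by
  have hroot : ∀ T ∈ (A.map fun g => cutTree g.1 g.2 (r.zipIdx 1)).map (shift 1),
      T.rootLabel? ≠ some 1 := by
    simp only [List.map_map, List.mem_map, Function.comp_apply, ← cutTree_zipIdx_succ]
    rintro _ ⟨g, -, rfl⟩ hT
    exact absurd (le_of_rootLabel?_cutTree_zipIdx hT) (by omega)
  have hsplit : splitAt1 (gapForest n J (s :: r)) =
      some (A.length, (gapForest n (J.erase s) r).map (shift 1)) := by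
    rw [h.gapForest_cons hes hsf, splitAt1_append_node hroot, h.gapForest_erase hes hsf]
    simp
  have hdec : ((gapForest n (J.erase s) r).map (shift 1)).map dec = gapForest n (J.erase s) r := by
    simp [List.map_map, Function.comp_def, dec_shift_one]
  rw [deltaF, hsplit]
  simp only [hdec]

/-- `ω` maps `(e, t]` onto `(e + f - t, f]` and `(t, f]` onto `(e, e + f - t]` by translations
and fixes the other gaps, so it carries the trees over `(e, t]` and `(t, f]` onto each other. -/
theorem GapSplit.swapAdj_gapForest {n : ℕ} {J : Finset ℕ} {A B : List (ℕ × ℕ)} {e f t : ℕ}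
    (hJ : J ⊆ Finset.Icc 1 (n - 1)) (h : GapSplit n J A e f B) (het : e < t) (htf : t < f)
    {r : List ℕ} (hr : ∀ x ∈ r, x ∈ J.erase t) :
    swapAdj A.length (gapForest n (J.erase t) r) =
      gapForest n (J.erase (e + f - t)) (r.map (conjGen n (J.erase t) t)) := by
  have hg : ∀ p ∈ r.zipIdx 1, (p.1 ≠ e ∧ p.1 ≠ f ∧ p.1 ≠ t) ∧ conjGen n (J.erase t) t p.1 =
      if p.1 < e then p.1 else if p.1 < t then p.1 + f - t
      else if p.1 < f then p.1 + e - t else p.1 := by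
    intro p hp
    obtain ⟨hpt, hpJ⟩ := Finset.mem_erase.1 (hr _ (List.fst_mem_of_mem_zipIdx hp))
    exact ⟨⟨(h.ne_of_mem hpJ).1, (h.ne_of_mem hpJ).2, hpt⟩, h.conjGen_eq hJ het htf hpJ hpt⟩
  rw [h.gapForest_erase het htf, swapAdj_append _ (List.length_map _),
    h.gapForest_erase (q := e + f - t) (by omega) (by omega), List.zipIdx_map]
  refine congrArg₂ (· ++ ·) (List.map_congr_left fun a ha => ?_) (congrArg₂ List.cons ?_
    (congrArg₂ List.cons ?_ (List.map_congr_left fun b hb => ?_)))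
  · refine (cutTree_map_fst _ rfl fun p hp => ?_).symm
    obtain ⟨hne, hp⟩ := hg p hp
    have := h.le_of_mem_left a ha
    split_ifs at hp <;> constructor <;> intro <;> omega
  · refine (cutTree_map_fst _ (by omega) fun p hp => ?_).symm
    obtain ⟨hne, hp⟩ := hg p hp
    split_ifs at hp <;> constructor <;> intro <;> omega
  · refine (cutTree_map_fst _ (by omega) fun p hp => ?_).symm
    obtain ⟨hne, hp⟩ := hg p hp
    split_ifs at hp <;> constructor <;> intro <;> omega
  · refine (cutTree_map_fst _ rfl fun p hp => ?_).symm
    obtain ⟨hne, hp⟩ := hg p hp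
    have := h.le_of_mem_right b hb
    split_ifs at hp <;> constructor <;> intro <;> omega

/-! ### The forest `φ(a)` -/

/-- The length-one forest with squash `c` and foliage `d`. -/
def elemForest : List ℕ → List ℕ → List LTree
  | x :: c, y :: d =>
    if x = y then leaf x :: elemForest c d
    else
      match d with
      | z :: d' => node 1 (leaf y) (leaf z) :: leavesOf d'
      | [] => []
  | _, _ => []

def alleyForest (n : ℕ) : Finset ℕ → List ℕ → List LTree
  | J, [] => leavesOf (phi n J)
  | J, s :: r => bullet (elemForest (phi n J) (phi n (J.erase s))) (alleyForest n (J.erase s) r)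

lemma eq_leaf_of_labels_eq_nil : ∀ {T : LTree}, T.labels = [] → ∃ x, T = leaf x
  | leaf x, _ => ⟨x, rfl⟩
  | node _ _ _, hT => by simp [labels] at hT

lemma eq_leavesOf_of_forestLabels_eq_nil :
    ∀ {X : List LTree}, forestLabels X = [] → X = leavesOf (forestFoliage X)
  | [], _ => rfl
  | leaf x :: X, hX => congrArg (leaf x :: ·) (eq_leavesOf_of_forestLabels_eq_nil (X := X) hX)
  | node _ _ _ :: _, hX => by simp [forestLabels, labels] at hX

lemma squash_leavesOf (c : List ℕ) : squash (leavesOf c) = c := by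
  simp [squash, leavesOf, Function.comp_def, value]

lemma forestFoliage_leavesOf (c : List ℕ) : forestFoliage (leavesOf c) = c := by
  simp only [forestFoliage, leavesOf, List.flatMap_map, foliage, List.flatMap_singleton']

lemma eq_elemForest : ∀ {X : List LTree}, forestLabels X = [1] →
    (∀ x ∈ forestFoliage X, 0 < x) → X = elemForest (squash X) (forestFoliage X)
  | [], hX, _ => by simp [forestLabels] at hX
  | leaf x :: X, hX, hpos => by
    have := eq_elemForest (X := X) hX fun y hy => hpos y (List.mem_cons_of_mem _ hy)
    change leaf x :: X = elemForest (x :: squash X) (x :: forestFoliage X)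
    simp only [elemForest, ↓reduceIte, ← this]
  | node i T₁ T₂ :: X, hX, hpos => by
    change (i :: (T₁.labels ++ T₂.labels)) ++ forestLabels X = [1] at hX
    simp only [List.cons_append, List.cons.injEq, List.append_eq_nil_iff] at hX
    obtain ⟨rfl, ⟨hT₁, hT₂⟩, hX⟩ := hX
    obtain ⟨y, rfl⟩ := eq_leaf_of_labels_eq_nil hT₁
    obtain ⟨z, rfl⟩ := eq_leaf_of_labels_eq_nil hT₂
    have hz : 0 < z := hpos z (by simp [forestFoliage, foliage])
    obtain ⟨c, rfl⟩ : ∃ c, X = leavesOf c := ⟨_, eq_leavesOf_of_forestLabels_eq_nil hX⟩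
    change _ = elemForest ((y + z) :: squash (leavesOf c)) (y :: z :: forestFoliage (leavesOf c))
    simp only [squash_leavesOf, forestFoliage_leavesOf, elemForest,
      if_neg (show y + z ≠ y by omega)]

lemma foldr_bullet_eq_alleyForest (n : ℕ) : ∀ (r : List ℕ) (J : Finset ℕ)
    (F : List (List LTree)), F.length = r.length → (∀ A ∈ F, IsLForest A ∧ forestLen A = 1) →
    (∀ (i : ℕ) (h : i < F.length),
      squash (F.get ⟨i, h⟩) = phi n (J \ (r.take i).toFinset) ∧
      forestFoliage (F.get ⟨i, h⟩) = phi n (J \ (r.take (i + 1)).toFinset)) →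
    F.foldr bullet (leavesOf (phi n (J \ r.toFinset))) = alleyForest n J r
  | [], J, [], _, _, _ => by simp [alleyForest]
  | s :: r, J, A :: F, hlen, hF, hphi => by
    have hsdiff : ∀ T : Finset ℕ, J \ insert s T = J.erase s \ T := fun T => by
      rw [Finset.sdiff_insert, Finset.erase_sdiff_comm]
    have hA : A = elemForest (phi n J) (phi n (J.erase s)) := by
      obtain ⟨⟨-, hlab, hpos⟩, hA1⟩ := hF A List.mem_cons_self
      rw [hA1, List.range'_one, List.perm_singleton] at hlab
      obtain ⟨hsq, hfol⟩ := hphi 0 (by simp)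
      simp only [List.get, List.take_zero, List.toFinset_nil, Finset.sdiff_empty] at hsq
      simp only [List.get, zero_add, List.take_succ_cons, List.take_zero, List.toFinset_cons,
        List.toFinset_nil, hsdiff, Finset.sdiff_empty] at hfol
      rw [eq_elemForest hlab hpos, hsq, hfol]
    rw [List.foldr_cons, List.toFinset_cons, hsdiff, alleyForest, hA,
      foldr_bullet_eq_alleyForest n r (J.erase s) F (by simpa using hlen)
        (fun B hB => hF B (List.mem_cons_of_mem _ hB)) fun i hi => ?_]
    simpa [List.take_succ_cons, hsdiff] using hphi (i + 1) (by simpa using hi)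

lemma eq_alleyForest_of_alleySpec {n : ℕ} {b : Alley} {X : List LTree} (h : AlleySpec n b X) :
    X = alleyForest n b.J b.s := by
  obtain ⟨-, -, F, hlen, hF, hphi, rfl⟩ := h
  exact foldr_bullet_eq_alleyForest n b.s b.J F hlen hF hphi

lemma graftForest_leavesOf_append (L : List LTree) (Y₂ : List LTree) :
    ∀ (c : List ℕ) (Y₁ : List LTree), Y₁.length = c.length →
      graftForest (leavesOf c ++ L) (Y₁ ++ Y₂) = Y₁ ++ graftForest L Y₂
  | [], [], _ => rfl
  | _ :: c, U :: Y₁, h =>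
    congrArg (U :: ·) (graftForest_leavesOf_append L Y₂ c Y₁ (by simpa using h))

lemma bullet_leavesOf_node {P R : List ℕ} {Y₁ Y₂ : List LTree} (y z : ℕ) (U V : LTree)
    (h₁ : Y₁.length = P.length) (h₂ : Y₂.length = R.length) :
    bullet (leavesOf P ++ node 1 (leaf y) (leaf z) :: leavesOf R) (Y₁ ++ U :: V :: Y₂) =
      Y₁.map (shift 1) ++ node 1 (U.shift 1) (V.shift 1) :: Y₂.map (shift 1) := by
  have hlen : forestLen (leavesOf P ++ node 1 (leaf y) (leaf z) :: leavesOf R) = 1 := by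
    simp [forestLen, leavesOf, numNodes, Function.comp_def]
  have hR : graftForest (leavesOf R) (Y₂.map (shift 1)) = Y₂.map (shift 1) := by
    simpa [graftForest] using graftForest_leavesOf_append [] [] R _ (by simpa using h₂)
  rw [bullet, hlen, List.map_append, List.map_cons, List.map_cons,
    graftForest_leavesOf_append _ _ P _ (by simpa using h₁)]
  change _ ++ node 1 (U.shift 1) (V.shift 1) :: graftForest (leavesOf R) (Y₂.map (shift 1)) = _
  rw [hR]

lemma elemForest_append {x y z : ℕ} {R R' : List ℕ} (hxy : x ≠ y) :
    ∀ P : List ℕ, elemForest (P ++ x :: R) (P ++ y :: z :: R') =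
      leavesOf P ++ node 1 (leaf y) (leaf z) :: leavesOf R'
  | [] => by simp [elemForest, hxy, leavesOf]
  | p :: P => by
    simp only [List.cons_append, elemForest, ↓reduceIte, elemForest_append hxy P]
    rfl

lemma GapSplit.elemForest_phi {n : ℕ} {J : Finset ℕ} {A B : List (ℕ × ℕ)} {e f s : ℕ}
    (h : GapSplit n J A e f B) (hes : e < s) (hsf : s < f) :
    elemForest (phi n J) (phi n (J.erase s)) =
      leavesOf (A.map fun g => g.2 - g.1) ++ node 1 (leaf (s - e)) (leaf (f - s)) ::
        leavesOf (B.map fun g => g.2 - g.1) := by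
  rw [phi_eq_map_gaps, phi_eq_map_gaps, h.gaps_eq, h.gaps_erase s hes hsf]
  simp only [List.map_append, List.map_cons]
  exact elemForest_append (by omega) _

lemma isAlley_erase_head {n s : ℕ} {J : Finset ℕ} {r : List ℕ} (h : IsAlley n ⟨J, s :: r⟩) :
    IsAlley n ⟨J.erase s, r⟩ := by
  obtain ⟨hJ, hnd, hmem⟩ := h
  refine ⟨(Finset.erase_subset _ _).trans hJ, (List.nodup_cons.1 hnd).2, fun x hx => ?_⟩
  exact Finset.mem_erase.2 ⟨fun hxs => (List.nodup_cons.1 hnd).1 (hxs ▸ hx),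
    hmem x (List.mem_cons_of_mem _ hx)⟩

theorem alleyForest_eq_gapForest {n : ℕ} :
    ∀ {r : List ℕ} {J : Finset ℕ}, IsAlley n ⟨J, r⟩ → alleyForest n J r = gapForest n J r
  | [], J, _ => by
    simp [alleyForest, gapForest, phi_eq_map_gaps, leavesOf, cutTree, Function.comp_def]
  | s :: r, J, hb => by
    obtain ⟨A, e, f, B, h, hes, hsf⟩ := exists_gapSplit hb.1 (hb.2.2 s List.mem_cons_self)
    rw [alleyForest, alleyForest_eq_gapForest (isAlley_erase_head hb), h.elemForest_phi hes hsf,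
      h.gapForest_erase hes hsf, bullet_leavesOf_node _ _ _ _ (by simp) (by simp),
      h.gapForest_cons hes hsf]

end AlleyForest

theorem delta_coincides (k : Type) [Field k] (n : ℕ)
    (a : Alley) (ha : IsAlley n a)
    (φF : Alley → List LTree) (hφ : ∀ b, IsAlley n b → AlleySpec n b (φF b)) :
    deltaF k (φF a) =
      (match a.s with
      | [] => Finsupp.single (φF a) 1
      | s1 :: rest =>
          Finsupp.single (φF ⟨a.J.erase s1, rest⟩) 1 -
          Finsupp.single (φF (actAlley n s1 ⟨a.J.erase s1, rest⟩)) 1) := by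
  have hφF : ∀ b, IsAlley n b → φF b = AlleyForest.gapForest n b.J b.s := fun b hb =>
    (AlleyForest.eq_alleyForest_of_alleySpec (hφ b hb)).trans
      (AlleyForest.alleyForest_eq_gapForest hb)
  obtain ⟨J, _ | ⟨t, r⟩⟩ := a
  · rw [AlleyForest.eq_alleyForest_of_alleySpec (hφ _ ha)]
    exact AlleyForest.deltaF_leavesOf k _
  · obtain ⟨A, e, f, B, h, het, htf⟩ :=
      AlleyForest.exists_gapSplit ha.1 (ha.2.2 t List.mem_cons_self)
    have hr : IsAlley n ⟨J.erase t, r⟩ := AlleyForest.isAlley_erase_head ha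
    change deltaF k (φF ⟨J, t :: r⟩) = Finsupp.single (φF ⟨J.erase t, r⟩) 1 -
      Finsupp.single (φF (actAlley n t ⟨J.erase t, r⟩)) 1
    rw [hφF _ (h.isAlley_actAlley ha.1 het htf hr), h.actAlley_erase ha.1 het htf, hφF _ ha,
      hφF _ hr, h.deltaF_gapForest_cons k het htf, h.swapAdj_gapForest ha.1 het htf hr.2.2]
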